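/- If xs : List Turn has odd length, then List.reverse (rl ▷ xs) = (Stream'.map inv rl) ▷ List.reverse xs. -/
import Mathlib


inductive Turn : Type
  | L
  | R
deriving DecidableEq

open Turn

def inv : Turn → Turn
  | L => R
  | R => L

def interleave {α : Type*} : Stream' α → List α → List α
  | zs, [] => [zs.head]
  | zs, y :: ys => zs.head :: y :: interleave zs.tail ys

infixr:67 " ▷ " => interleave

def lr : Stream' Turn := fun n => if n % 2 = 0 then L else R

def rl : Stream' Turn := fun n => if n % 2 = 0 then R else L

theorem lemA {α : Type*} (s : Stream' α) (hs : s.tail.tail = s) :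
    ∀ (l : List α), Odd l.length → ∀ b a : α,
      s ▷ (l ++ [b, a]) = (s ▷ l) ++ [b, s.head, a, s.tail.head]
  | [], h => by simp at h
  | [x], _ => by intro b a; simp [interleave, hs]
  | x :: y :: l', h => by
    intro b a
    have h' : Odd l'.length := by
      obtain ⟨k, hk⟩ := h
      exact ⟨k - 1, by simp at hk; omega⟩
    have ih := lemA s hs l' h' b a
    simp [interleave, hs, ih]

theorem main_aux : ∀ (xs : List Turn), Odd xs.length →
    List.reverse (rl ▷ xs) = (Stream'.map inv rl) ▷ List.reverse xs
  | [], h => by simp at h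
  | [x], _ => by
    simp [interleave, rl, Stream'.head, Stream'.tail, Stream'.map, Stream'.get, inv]
  | x :: y :: l', h => by
    have h' : Odd l'.length := by
      obtain ⟨k, hk⟩ := h
      exact ⟨k - 1, by simp at hk; omega⟩
    have hrl : rl.tail.tail = rl := by
      ext n
      show rl (n + 1 + 1) = rl n
      simp only [rl]
      have : (n + 1 + 1) % 2 = n % 2 := by omega
      rw [this]
    have hmrl : (Stream'.map inv rl).tail.tail = Stream'.map inv rl := by
      rw [← Stream'.map_tail, ← Stream'.map_tail, hrl]
    have ih := main_aux l' h'
    have hA := lemA (Stream'.map inv rl) hmrl l'.reverse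
      (by simpa using h') y x
    simp only [List.reverse_cons, List.append_assoc, List.cons_append,
      List.nil_append] at *
    show List.reverse (rl ▷ (x :: y :: l')) =
      (Stream'.map inv rl) ▷ (l'.reverse ++ [y, x])
    rw [hA]
    simp [interleave, hrl, ih, rl, Stream'.head, Stream'.tail, Stream'.map, Stream'.get, inv]

theorem reverse_interleave_rl (xs : List Turn) (hodd : Odd xs.length) :
    List.reverse (rl ▷ xs) = (Stream'.map inv rl) ▷ List.reverse xs := by
  exact main_aux xs hodd
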